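/- arXiv:1307.2765 — 4 statements merged into one kernel-verified Lean document; each statement's English description precedes it below -/
import Mathlib

section
/- Let I be a filtered category, let F : I ⥤ SSet be a diagram of simplicial sets, let A be a simplicial set, and let c be a cocone on F with apex A such that every component c_i : F(i) ⟶ A is a Kan fibration. Then the induced morphism colim F ⟶ A from the colimit of F is a Kan fibration. -/
/-!
Horns are finite simplicial sets, hence finitely presentable: a map from a horn into a filtered
colimit factors through some stage `F(i)`. A lifting problem against `colim F ⟶ A` is therefore
a lifting problem against the Kan fibration `c_i`, and its solution, pushed into the colimit,
solves the original one.
-/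

universe u

open CategoryTheory Simplicial CategoryTheory.Limits Opposite

/-- A morphism of simplicial sets is a Kan fibration if it has the right lifting property
with respect to all horn inclusions `Λ[n, k] ⟶ Δ[n]` with `n ≥ 1`, `0 ≤ k ≤ n`. -/
def KanFibration {X Y : SSet.{u}} (f : X ⟶ Y) : Prop :=
  ∀ ⦃n : ℕ⦄, 1 ≤ n → ∀ k : Fin (n + 1), HasLiftingProperty (SSet.horn n k).ι f

theorem hasLiftingProperty_isColimit_desc {C : Type*} [Category C] {J : Type u} [SmallCategory J]
    [IsFiltered J] {F : J ⥤ C} {t : Cocone F} (ht : IsColimit t) (c : Cocone F)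
    {A B : C} (i : A ⟶ B) [IsFinitelyPresentable.{u} A]
    (h : ∀ j, HasLiftingProperty i (c.ι.app j)) : HasLiftingProperty i (ht.desc c) where
  sq_hasLift {f g} sq := by
    obtain ⟨j, f', rfl⟩ := IsFinitelyPresentable.exists_hom_of_isColimit ht f
    have sq' : CommSq f' i (c.ι.app j) g := ⟨by rw [← sq.w, Category.assoc, ht.fac]⟩
    exact ⟨⟨{ l := sq'.lift ≫ t.ι.app j
              fac_left := by rw [← Category.assoc, sq'.fac_left]
              fac_right := by rw [Category.assoc, ht.fac, sq'.fac_right] }⟩⟩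

/-- If `c` is a cocone on a filtered diagram of simplicial sets all of whose components
are Kan fibrations, then the induced morphism from the colimit is a Kan fibration. -/
theorem kanFibration_colimit_desc_of_filtered {I : Type u} [SmallCategory I] [IsFiltered I]
    (F : I ⥤ SSet.{u}) (c : Cocone F) (hc : ∀ i : I, KanFibration (c.ι.app i)) :
    KanFibration (colimit.desc F c) :=
  fun _ hn k => hasLiftingProperty_isColimit_desc (colimit.isColimit F) c _ fun i => hc i hn k
end

section
/- Let I be a filtered category, let F, G : I ⥤ SSet be diagrams of simplicial sets such that every F(i) and every G(i) is a Kan complex, and let η : F ⟶ G be a natural transformation each of whose components η_i : F(i) ⟶ G(i) is a Kan fibration. Then the induced morphism colim F ⟶ colim G between the colimits is a Kan fibration. -/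
universe u

open CategoryTheory Simplicial CategoryTheory.Limits Opposite

instance instSubsingletonDeltaZeroObj (m : SimplexCategoryᵒᵖ) : Subsingleton (Δ[0].obj m) where
  allEq a b := by
    apply SSet.stdSimplex.objEquiv.injective
    apply SimplexCategory.Hom.ext
    ext x
    simp [Fin.val_eq_zero]

/-- The unique morphism from a simplicial set to the terminal simplicial set `Δ[0]`. -/
def SSet.ptMap (X : SSet.{u}) : X ⟶ Δ[0] where
  app _ := TypeCat.ofHom fun _ => SSet.stdSimplex.objMk (OrderHom.const _ 0)
  naturality _ _ _ := by ext; apply Subsingleton.elim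

/-- A simplicial set is a Kan complex if the unique morphism to `Δ[0]` is a Kan fibration. -/
def IsKanComplex (X : SSet.{u}) : Prop := KanFibration (SSet.ptMap X)

universe w v

/- Lifting problems against `colimMap η` descend to a finite stage: the square's corners,
being maps out of finitely presentable objects, factor through some `F i` and `G j`, and the
commutativity of the square already holds at some later stage `k`, where `η.app k` lifts. -/
theorem hasLiftingProperty_colimMap_of_isFiltered {C : Type u} [Category.{v} C]
    {J : Type w} [SmallCategory J] [IsFiltered J] {F G : J ⥤ C} [HasColimit F] [HasColimit G]
    (η : F ⟶ G) {A B : C} (i : A ⟶ B) [IsFinitelyPresentable.{w} A]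
    [IsFinitelyPresentable.{w} B] (h : ∀ j, HasLiftingProperty i (η.app j)) :
    HasLiftingProperty i (colimMap η) where
  sq_hasLift {u v} sq := by
    obtain ⟨j₁, u', rfl⟩ := IsFinitelyPresentable.exists_hom_of_isColimit (colimit.isColimit F) u
    obtain ⟨j₂, v', rfl⟩ := IsFinitelyPresentable.exists_hom_of_isColimit (colimit.isColimit G) v
    obtain ⟨k, a, b, hab⟩ := IsFinitelyPresentable.exists_eq_of_isColimit (colimit.isColimit G)
      (u' ≫ η.app j₁) (i ≫ v') (by simpa using sq.w)
    have sq_k : CommSq (u' ≫ F.map a) i (η.app k) (v' ≫ G.map b) :=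
      ⟨by simpa using hab⟩
    exact ⟨⟨{ l := sq_k.lift ≫ colimit.ι F k
              fac_left := by simp [reassoc_of% sq_k.fac_left]
              fac_right := by simp [reassoc_of% sq_k.fac_right] }⟩⟩

theorem kanFibration_colimMap_of_filtered_general {I : Type u} [SmallCategory I] [IsFiltered I]
    (F G : I ⥤ SSet.{u})
    (η : F ⟶ G) (hη : ∀ i : I, KanFibration (η.app i)) :
    KanFibration (colimMap η) :=
  -- horns and standard simplices are finite simplicial sets, hence finitely presentable
  fun _ hn k => hasLiftingProperty_colimMap_of_isFiltered η _ fun i => hη i hn k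

/-- A filtered colimit of Kan fibrations between Kan complexes is a Kan fibration. -/
theorem kanFibration_colimMap_of_filtered {I : Type u} [SmallCategory I] [IsFiltered I]
    (F G : I ⥤ SSet.{u}) (hF : ∀ i : I, IsKanComplex (F.obj i))
    (hG : ∀ i : I, IsKanComplex (G.obj i))
    (η : F ⟶ G) (hη : ∀ i : I, KanFibration (η.app i)) :
    KanFibration (colimMap η) :=
  kanFibration_colimMap_of_filtered_general F G η hη
end

section
/- Let C be a category and consider a commutative square f ∘ p = g ∘ q, where p : r ⟶ s, q : r ⟶ t, f : s ⟶ w, g : t ⟶ w. Suppose there are sections a : s ⟶ r with p ∘ a = 𝟙_s, c : t ⟶ r with q ∘ c = 𝟙_t, and b : w ⟶ t with g ∘ b = 𝟙_w, satisfying the compatibility q ∘ a = b ∘ f. Then the square is an absolute pushout: it is a pushout square in C, and for every functor F : C ⥤ D into any category D, the image square F(f) ∘ F(p) = F(g) ∘ F(q) is a pushout square in D. -/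
/-!
A cocone `(x, y)` under the span `s ← r → t` factors through `w` via `b ≫ y`: composing with
`f` gives `a ≫ q ≫ y = a ≫ p ≫ x = x`, composing with `g` gives `y` after cancelling the split
epimorphism `q`, and uniqueness comes from `b ≫ g = 𝟙 w`. All of these data are equations
between composites, so every functor carries them along, which makes the pushout absolute.
-/

universe v u v' u'

open CategoryTheory CategoryTheory.Limits

namespace CategoryTheory

variable {C : Type u} [Category.{v} C] {r s t w : C}

structure IsSplitPushout (p : r ⟶ s) (q : r ⟶ t) (f : s ⟶ w) (g : t ⟶ w) where
  sectionP : s ⟶ r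
  sectionQ : t ⟶ r
  sectionG : w ⟶ t
  comm : p ≫ f = q ≫ g
  sectionP_comp : sectionP ≫ p = 𝟙 s
  sectionQ_comp : sectionQ ≫ q = 𝟙 t
  sectionG_comp : sectionG ≫ g = 𝟙 w
  sectionP_comp_q : sectionP ≫ q = f ≫ sectionG

namespace IsSplitPushout

variable {p : r ⟶ s} {q : r ⟶ t} {f : s ⟶ w} {g : t ⟶ w}

def map (S : IsSplitPushout p q f g) {D : Type u'} [Category.{v'} D] (F : C ⥤ D) :
    IsSplitPushout (F.map p) (F.map q) (F.map f) (F.map g) where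
  sectionP := F.map S.sectionP
  sectionQ := F.map S.sectionQ
  sectionG := F.map S.sectionG
  comm := by simp only [← F.map_comp, S.comm]
  sectionP_comp := by rw [← F.map_comp, S.sectionP_comp, F.map_id]
  sectionQ_comp := by rw [← F.map_comp, S.sectionQ_comp, F.map_id]
  sectionG_comp := by rw [← F.map_comp, S.sectionG_comp, F.map_id]
  sectionP_comp_q := by simp only [← F.map_comp, S.sectionP_comp_q]

theorem isPushout (S : IsSplitPushout p q f g) : IsPushout p q f g := by
  have : Epi q := (SplitEpi.mk S.sectionQ S.sectionQ_comp).epi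
  have inl_desc (cocone : PushoutCocone p q) : f ≫ S.sectionG ≫ cocone.inr = cocone.inl := by
    rw [← Category.assoc, ← S.sectionP_comp_q, Category.assoc, ← cocone.condition,
      ← Category.assoc, S.sectionP_comp, Category.id_comp]
  refine IsPushout.of_isColimit' ⟨S.comm⟩ (PushoutCocone.IsColimit.mk _
    (fun cocone => S.sectionG ≫ cocone.inr) inl_desc (fun cocone => ?_)
    (fun cocone m _ hm => ?_))
  · rw [← cancel_epi q, ← Category.assoc, ← S.comm, Category.assoc, inl_desc, cocone.condition]
  · rw [← hm, ← Category.assoc, S.sectionG_comp, Category.id_comp]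

end IsSplitPushout

end CategoryTheory

/-- A commutative square equipped with compatible sections of `p`, `q` and `g` is an
absolute pushout: it is a pushout, and it remains a pushout after applying any functor. -/
theorem absolute_pushout_of_sections {C : Type u} [Category.{v} C] {r s t w : C}
    (p : r ⟶ s) (q : r ⟶ t) (f : s ⟶ w) (g : t ⟶ w) (comm : p ≫ f = q ≫ g)
    (a : s ⟶ r) (ha : a ≫ p = 𝟙 s)
    (c : t ⟶ r) (hc : c ≫ q = 𝟙 t)
    (b : w ⟶ t) (hb : b ≫ g = 𝟙 w)
    (compat : a ≫ q = f ≫ b) :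
    IsPushout p q f g ∧
      ∀ {D : Type u'} [Category.{v'} D] (F : C ⥤ D),
        IsPushout (F.map p) (F.map q) (F.map f) (F.map g) := by
  let S : IsSplitPushout p q f g := ⟨a, c, b, comm, ha, hc, hb, compat⟩
  exact ⟨S.isPushout, fun F => (S.map F).isPushout⟩
end

section
/- Let Φ : SSet ⥤ SSet be a functor that preserves Kan fibrations (i.e. Φ.map f is a Kan fibration whenever f is) and such that Φ(⊤) is a Kan complex, where ⊤ denotes the terminal simplicial set. Consider the tower ⋯ ⟶ Φ³(⊤) ⟶ Φ²(⊤) ⟶ Φ(⊤) ⟶ ⊤ whose transition morphism Φⁿ⁺¹(⊤) ⟶ Φⁿ(⊤) is Φⁿ applied to the unique morphism Φ(⊤) ⟶ ⊤. Then the limit of this tower is a Kan complex. (In particular, if Φ has a terminal coalgebra whose underlying simplicial set is this limit, then that terminal coalgebra is fibrant.) -/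
universe u

open CategoryTheory Simplicial CategoryTheory.Limits Opposite

/-- The objects `Φⁿ(⊤)` of the tower associated to an endofunctor `Φ` of simplicial
sets, starting at the terminal simplicial set. -/
noncomputable def towerObj (Φ : SSet.{u} ⥤ SSet.{u}) : ℕ → SSet.{u}
| 0 => ⊤_ SSet.{u}
| n + 1 => Φ.obj (towerObj Φ n)

/-- The transition morphisms `Φⁿ⁺¹(⊤) ⟶ Φⁿ(⊤)` of the tower: `Φⁿ` applied to the
unique morphism `Φ(⊤) ⟶ ⊤`. -/
noncomputable def towerMap (Φ : SSet.{u} ⥤ SSet.{u}) :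
    ∀ n : ℕ, towerObj Φ (n + 1) ⟶ towerObj Φ n
| 0 => terminal.from _
| n + 1 => Φ.map (towerMap Φ n)

/-- The tower `⋯ ⟶ Φ²(⊤) ⟶ Φ(⊤) ⟶ ⊤` as a functor `ℕᵒᵖ ⥤ SSet`. -/
noncomputable def tower (Φ : SSet.{u} ⥤ SSet.{u}) : ℕᵒᵖ ⥤ SSet.{u} :=
  (Functor.ofSequence (fun n => (towerMap Φ n).op)).leftOp

/-!
Each transition map `Φⁿ⁺¹(⊤) ⟶ Φⁿ(⊤)` is a Kan fibration: for `n = 0` this is the hypothesis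
on `Φ(⊤)`, and `Φ` carries fibrations to fibrations. A horn-filling problem against the limit is
then solved one stage at a time, lifting the filler at stage `n` through the fibration
`Φⁿ⁺¹(⊤) ⟶ Φⁿ(⊤)`; the compatible fillers assemble into a filler in the limit. This is the
dual of the stability of left lifting properties under transfinite composition.
-/

namespace CategoryTheory.Limits

open HasLiftingProperty.transfiniteComposition in
lemma IsLimit.hasLiftingProperty_π_app_zero {C : Type*} [Category C] {F : ℕᵒᵖ ⥤ C}
    {c : Cone F} (hc : IsLimit c) {A B : C} (i : A ⟶ B)
    (hF : ∀ n, HasLiftingProperty i (F.map (homOfLE (Nat.le_succ n)).op)) :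
    HasLiftingProperty i (c.π.app (Opposite.op 0)) :=
  (hasLiftingProperty_ι_app_bot (isColimitCoconeRightOpOfCone F hc) (p := i.op)
    fun n _ => (hF n).op).unop

end CategoryTheory.Limits

lemma kanFibration_limit_π_zero {F : ℕᵒᵖ ⥤ SSet.{u}}
    (hF : ∀ n, KanFibration (F.map (homOfLE (Nat.le_succ n)).op)) :
    KanFibration (limit.π F (op 0)) :=
  fun _ hn k => (limit.isLimit F).hasLiftingProperty_π_app_zero _ fun m => hF m hn k

lemma isKanComplex_iff_kanFibration_terminal_from (X : SSet.{u}) :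
    IsKanComplex X ↔ KanFibration (terminal.from X) := by
  let e : Arrow.mk X.ptMap ≅ Arrow.mk (terminal.from X) :=
    Arrow.isoMk (Iso.refl X) (terminalIsoIsTerminal SSet.stdSimplex.isTerminalObj₀.{u}).symm
      (terminal.hom_ext _ _)
  exact forall₂_congr fun _ _ => forall_congr' fun _ =>
    HasLiftingProperty.iff_of_arrow_iso_right _ e

lemma kanFibration_towerMap (Φ : SSet.{u} ⥤ SSet.{u})
    (hΦ : ∀ {X Y : SSet.{u}} (f : X ⟶ Y), KanFibration f → KanFibration (Φ.map f))
    (hT : IsKanComplex (Φ.obj (⊤_ SSet.{u}))) :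
    ∀ n, KanFibration (towerMap Φ n)
| 0 => (isKanComplex_iff_kanFibration_terminal_from _).1 hT
| n + 1 => hΦ _ (kanFibration_towerMap Φ hΦ hT n)

lemma tower_map_succ (Φ : SSet.{u} ⥤ SSet.{u}) (n : ℕ) :
    (tower Φ).map (homOfLE (Nat.le_succ n)).op = towerMap Φ n :=
  Functor.ofOpSequence_map_homOfLE_succ (towerMap Φ) n

/-- If `Φ` preserves Kan fibrations and `Φ(⊤)` is a Kan complex, then the limit of the
tower `⋯ ⟶ Φ²(⊤) ⟶ Φ(⊤) ⟶ ⊤` is a Kan complex. -/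
theorem isKanComplex_limit_of_tower (Φ : SSet.{u} ⥤ SSet.{u})
    (hΦ : ∀ {X Y : SSet.{u}} (f : X ⟶ Y), KanFibration f → KanFibration (Φ.map f))
    (hT : IsKanComplex (Φ.obj (⊤_ SSet.{u}))) :
    IsKanComplex (limit (tower Φ)) := by
  rw [isKanComplex_iff_kanFibration_terminal_from,
    terminal.hom_ext (terminal.from _) (limit.π (tower Φ) (op 0))]
  exact kanFibration_limit_π_zero fun n => tower_map_succ Φ n ▸ kanFibration_towerMap Φ hΦ hT n
end
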